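/- arXiv:1501.06435 — 5 statements merged into one kernel-verified Lean document; each statement's English description precedes it below -/
import Mathlib

section
/- For integers l, m, the vector fields Ê_(l) = Σ_{i=1}^n (u^i)^l ∂_i − l (u^j)^{l−1} u^{n+1} ∂_{n+1} on (an open subset of) ℝ^{n+1} (with fixed index j) satisfy the commutation relation [Ê_(l), Ê_(m)] = (m − l) Ê_(m+l−1). -/
open scoped BigOperators

/-- Partial derivative of a scalar function on `ℝ^m` in the `k`-th coordinate direction. -/
noncomputable def pderiv' {m : ℕ} (f : (Fin m → ℝ) → ℝ) (k : Fin m) (u : Fin m → ℝ) : ℝ :=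
  fderiv ℝ f u (Pi.single k 1)

/-- Lie bracket of vector fields on `ℝ^m`: `[X,Y]^i = X^k ∂_k Y^i - Y^k ∂_k X^i`. -/
noncomputable def lieB {m : ℕ} (X Y : (Fin m → ℝ) → (Fin m → ℝ)) (u : Fin m → ℝ) :
    Fin m → ℝ :=
  fun i => ∑ k, (X u k * pderiv' (fun v => Y v i) k u - Y u k * pderiv' (fun v => X v i) k u)

/-- The vector field `Ê_(l) = Σ_{i=1}^n (u^i)^l ∂_i - l (u^j)^(l-1) u^(n+1) ∂_(n+1)` on ℝ^(n+1). -/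
noncomputable def Ehat (n : ℕ) (j : Fin n) (l : ℤ) (u : Fin (n+1) → ℝ) : Fin (n+1) → ℝ :=
  fun i => if h : (i : ℕ) < n then (u i) ^ l
    else -(l : ℝ) * (u (Fin.castSucc j)) ^ (l - 1) * u (Fin.last n)

/-! The bracket is `[X, Y]^i = DY^i(X) - DX^i(Y)`. On the first `n` coordinates this is the
one-variable identity `[x^l ∂ₓ, x^m ∂ₓ] = (m - l) x^(m+l-1) ∂ₓ`; the last coordinate is a direct
computation in `u^j` and `u^(n+1)`, where the cross terms `l m (u^j)^(l+m-2) u^(n+1)` cancel. -/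

theorem sum_mul_pderiv'_eq_fderiv {N : ℕ} (f : (Fin N → ℝ) → ℝ) (u w : Fin N → ℝ) :
    ∑ k, w k * pderiv' f k u = fderiv ℝ f u w := by
  have h := (fderiv ℝ f u : (Fin N → ℝ) →ₗ[ℝ] ℝ).pi_apply_eq_sum_univ w
  simp only [ContinuousLinearMap.coe_coe, smul_eq_mul] at h
  simp only [h, pderiv']
  congr! 3 with k
  ext j
  simp [Pi.single_apply, eq_comm]

theorem lieB_apply_eq_fderiv {N : ℕ} (X Y : (Fin N → ℝ) → (Fin N → ℝ)) (u : Fin N → ℝ)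
    (i : Fin N) :
    lieB X Y u i = fderiv ℝ (fun v => Y v i) u (X u) - fderiv ℝ (fun v => X v i) u (Y u) := by
  simp only [lieB, Finset.sum_sub_distrib, sum_mul_pderiv'_eq_fderiv]

theorem hasFDerivAt_apply_zpow {N : ℕ} (i : Fin N) (l : ℤ) {u : Fin N → ℝ} (hu : u i ≠ 0) :
    HasFDerivAt (fun v : Fin N → ℝ => v i ^ l)
      ((l * u i ^ (l - 1)) • ContinuousLinearMap.proj (R := ℝ) (φ := fun _ : Fin N => ℝ) i) u :=
  (hasDerivAt_zpow l (u i) (.inl hu)).comp_hasFDerivAt (f := fun v : Fin N → ℝ => v i) u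
    (hasFDerivAt_apply i u)

theorem fderiv_apply_zpow {N : ℕ} (i : Fin N) (l : ℤ) {u : Fin N → ℝ} (hu : u i ≠ 0)
    (w : Fin N → ℝ) :
    fderiv ℝ (fun v : Fin N → ℝ => v i ^ l) u w = l * u i ^ (l - 1) * w i := by
  simp [(hasFDerivAt_apply_zpow i l hu).fderiv]

theorem fderiv_const_mul_apply_zpow_mul_apply {N : ℕ} (c : ℝ) (a b : Fin N) (e : ℤ)
    {u : Fin N → ℝ} (hu : u a ≠ 0) (w : Fin N → ℝ) :
    fderiv ℝ (fun v : Fin N → ℝ => c * v a ^ e * v b) u w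
      = c * (e * u a ^ (e - 1) * w a * u b + u a ^ e * w b) := by
  have h : HasFDerivAt (fun v : Fin N → ℝ => c * v a ^ e * v b) _ u :=
    ((hasFDerivAt_apply_zpow a e hu).const_mul c).mul (hasFDerivAt_apply b u)
  rw [h.fderiv]
  simp only [add_apply, smul_apply, ContinuousLinearMap.proj_apply, smul_eq_mul]
  ring

theorem zpow_mul_zpow_of_add_eq {x : ℝ} (hx : x ≠ 0) {a b c : ℤ} (h : a + b = c) :
    x ^ a * x ^ b = x ^ c := by
  rw [← zpow_add₀ hx, h]

namespace Ehat

variable {n : ℕ} (j : Fin n) (l : ℤ)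

theorem apply_castSucc (u : Fin (n + 1) → ℝ) (i : Fin n) :
    Ehat n j l u i.castSucc = u i.castSucc ^ l := by
  simp [Ehat]

theorem apply_last (u : Fin (n + 1) → ℝ) :
    Ehat n j l u (Fin.last n) = -l * u j.castSucc ^ (l - 1) * u (Fin.last n) := by
  simp [Ehat]

end Ehat

/-- `[Ê_(l), Ê_(m)] = (m - l) Ê_(m+l-1)` on the open set where the first
`n` coordinates are nonzero. -/
theorem stmt0 (n : ℕ) (j : Fin n) (l m : ℤ) (u : Fin (n+1) → ℝ)
    (hu : ∀ i : Fin n, u (Fin.castSucc i) ≠ 0) :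
    lieB (Ehat n j l) (Ehat n j m) u
      = fun i => ((m - l : ℤ) : ℝ) * Ehat n j (m + l - 1) u i := by
  funext i
  rw [lieB_apply_eq_fderiv]
  induction i using Fin.lastCases with
  | cast i =>
    have hx := hu i
    simp only [Ehat.apply_castSucc, fderiv_apply_zpow _ _ hx]
    push_cast
    linear_combination (m : ℝ) * zpow_mul_zpow_of_add_eq hx (show m - 1 + l = m + l - 1 by ring)
      - (l : ℝ) * zpow_mul_zpow_of_add_eq hx (show l - 1 + m = m + l - 1 by ring)
  | last =>
    have hx := hu j
    simp only [Ehat.apply_last, Ehat.apply_castSucc,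
      fderiv_const_mul_apply_zpow_mul_apply _ _ _ _ hx]
    set t := u (Fin.last n)
    have hm := zpow_mul_zpow_of_add_eq hx (show m - 1 - 1 + l = m + l - 1 - 1 by ring)
    have hl := zpow_mul_zpow_of_add_eq hx (show l - 1 - 1 + m = m + l - 1 - 1 by ring)
    push_cast
    linear_combination (-(m : ℝ) * (m - 1) * t) * hm + ((l : ℝ) * (l - 1) * t) * hl
end

section
/- The system of six ODEs F₁₂' = −[(F₁₂F₂₃−F₁₂F₁₃)z − F₁₂F₂₃ + F₃₂F₁₃]/(z(z−1)), F₂₁' = [(F₂₁F₂₃−F₂₁F₁₃)z + F₂₃F₃₁ − F₂₃F₂₁]/(z(z−1)), F₁₃' = −F₁₂', F₃₁' = −[(−F₃₁F₁₂+F₂₁F₃₂)z + F₃₁F₃₂ − F₂₁F₃₂]/(z(z−1)), F₂₃' = −F₂₁', F₃₂' = −F₃₁' admits the first integrals I₁ = F₁₂+F₁₃, I₂ = F₂₃+F₂₁, I₃ = F₃₁+F₃₂, and I₄ = F₃₁F₁₃ + F₁₂F₂₁ + F₂₃F₃₂; i.e., each of I₁,…,I₄ has zero derivative along any solution. -/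
/-!
Along the flow `F₁₃' = -F₁₂'`, `F₂₃' = -F₂₁'`, `F₃₂' = -F₃₁'`, so the three sums are constant, and
`I₄' = F₃₁' (F₁₃ - F₂₃) + F₁₂' (F₂₁ - F₃₁) + F₂₁' (F₁₂ - F₃₂)`. All three velocities share the
factor `1 / (z (z - 1))`, and the corresponding combination of their numerators vanishes
identically, so `I₄' = 0`.
-/

section FirstIntegrals

variable {𝕜 : Type*} [NontriviallyNormedField 𝕜]

theorem hasDerivAt_add_eq_zero_of_neg {E : Type*} [NormedAddCommGroup E] [NormedSpace 𝕜 E]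
    {f g : 𝕜 → E} {a : E} {z : 𝕜} (hf : HasDerivAt f (-a) z) (hg : HasDerivAt g a z) :
    HasDerivAt (fun t => f t + g t) 0 z :=
  (hf.add hg).congr_deriv (neg_add_cancel a)

theorem hasDerivAt_cyclic_quadratic_of_neg {F12 F21 F13 F31 F23 F32 : 𝕜 → 𝕜} {a b c z : 𝕜}
    (h12 : HasDerivAt F12 (-a) z) (h21 : HasDerivAt F21 b z) (h13 : HasDerivAt F13 a z)
    (h31 : HasDerivAt F31 (-c) z) (h23 : HasDerivAt F23 (-b) z) (h32 : HasDerivAt F32 c z) :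
    HasDerivAt (fun t => F31 t * F13 t + F12 t * F21 t + F23 t * F32 t)
      (-c * (F13 z - F23 z) - a * (F21 z - F31 z) + b * (F12 z - F32 z)) z :=
  (((h31.mul h13).add (h12.mul h21)).add (h23.mul h32)).congr_deriv (by ring)

end FirstIntegrals

theorem stmt11_general (F12 F21 F13 F31 F23 F32 : ℝ → ℝ) (S : Set ℝ)
    (hode : ∀ z ∈ S,
      HasDerivAt F12 (-(((F12 z * F23 z - F12 z * F13 z) * z - F12 z * F23 z
        + F32 z * F13 z) / (z * (z - 1)))) z ∧
      HasDerivAt F21 (((F21 z * F23 z - F21 z * F13 z) * z + F23 z * F31 z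
        - F23 z * F21 z) / (z * (z - 1))) z ∧
      HasDerivAt F13 (((F12 z * F23 z - F12 z * F13 z) * z - F12 z * F23 z
        + F32 z * F13 z) / (z * (z - 1))) z ∧
      HasDerivAt F31 (-(((-(F31 z * F12 z) + F21 z * F32 z) * z + F31 z * F32 z
        - F21 z * F32 z) / (z * (z - 1)))) z ∧
      HasDerivAt F23 (-(((F21 z * F23 z - F21 z * F13 z) * z + F23 z * F31 z
        - F23 z * F21 z) / (z * (z - 1)))) z ∧
      HasDerivAt F32 (((-(F31 z * F12 z) + F21 z * F32 z) * z + F31 z * F32 z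
        - F21 z * F32 z) / (z * (z - 1))) z) :
    ∀ z ∈ S,
      HasDerivAt (fun t => F12 t + F13 t) 0 z ∧
      HasDerivAt (fun t => F23 t + F21 t) 0 z ∧
      HasDerivAt (fun t => F31 t + F32 t) 0 z ∧
      HasDerivAt (fun t => F31 t * F13 t + F12 t * F21 t + F23 t * F32 t) 0 z := by
  intro z hz
  obtain ⟨h12, h21, h13, h31, h23, h32⟩ := hode z hz
  exact ⟨hasDerivAt_add_eq_zero_of_neg h12 h13, hasDerivAt_add_eq_zero_of_neg h23 h21,
    hasDerivAt_add_eq_zero_of_neg h31 h32,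
    (hasDerivAt_cyclic_quadratic_of_neg h12 h21 h13 h31 h23 h32).congr_deriv (by ring)⟩

/-- the six-component ODE system admits the first integrals
`I₁ = F₁₂+F₁₃`, `I₂ = F₂₃+F₂₁`, `I₃ = F₃₁+F₃₂`, `I₄ = F₃₁F₁₃+F₁₂F₂₁+F₂₃F₃₂`:
each has zero derivative along any solution. -/
theorem stmt11 (F12 F21 F13 F31 F23 F32 : ℝ → ℝ) (S : Set ℝ)
    (hS : ∀ z ∈ S, z ≠ 0 ∧ z ≠ 1)
    (hode : ∀ z ∈ S,
      HasDerivAt F12 (-(((F12 z * F23 z - F12 z * F13 z) * z - F12 z * F23 z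
        + F32 z * F13 z) / (z * (z - 1)))) z ∧
      HasDerivAt F21 (((F21 z * F23 z - F21 z * F13 z) * z + F23 z * F31 z
        - F23 z * F21 z) / (z * (z - 1))) z ∧
      HasDerivAt F13 (((F12 z * F23 z - F12 z * F13 z) * z - F12 z * F23 z
        + F32 z * F13 z) / (z * (z - 1))) z ∧
      HasDerivAt F31 (-(((-(F31 z * F12 z) + F21 z * F32 z) * z + F31 z * F32 z
        - F21 z * F32 z) / (z * (z - 1)))) z ∧
      HasDerivAt F23 (-(((F21 z * F23 z - F21 z * F13 z) * z + F23 z * F31 z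
        - F23 z * F21 z) / (z * (z - 1)))) z ∧
      HasDerivAt F32 (((-(F31 z * F12 z) + F21 z * F32 z) * z + F31 z * F32 z
        - F21 z * F32 z) / (z * (z - 1))) z) :
    ∀ z ∈ S,
      HasDerivAt (fun t => F12 t + F13 t) 0 z ∧
      HasDerivAt (fun t => F23 t + F21 t) 0 z ∧
      HasDerivAt (fun t => F31 t + F32 t) 0 z ∧
      HasDerivAt (fun t => F31 t * F13 t + F12 t * F21 t + F23 t * F32 t) 0 z :=
  stmt11_general F12 F21 F13 F31 F23 F32 S hode
end

section
/- Let (F₁₂,…,F₃₂) solve the six-component ODE system with first-integral values d₁ = F₁₂+F₁₃, d₂ = F₂₃+F₂₁, d₃ = F₃₁+F₃₂, q₁ = F₃₁F₁₃+F₁₂F₂₁+F₂₃F₃₂, q₂ = −d₃q₁+d₁d₂d₃. Define f by f = F₂₃F₃₂ + zF₁₂F₂₁ − q₁/2. Then f' = F₁₂F₂₁, F₂₃F₃₂ = f − zf' + q₁/2, F₁₃F₃₁ = (z−1)f' − f + q₁/2, and f satisfies [z(z−1)f'']² = [q₂ − (d₂−d₃)g₂ − (d₁−d₃)g₁]² −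 4f' g₁ g₂, where g₁ = f − zf' + q₁/2 and g₂ = (z−1)f' − f + q₁/2. -/
/-!
Along the flow, `(F₁₂F₂₁)' = (a - b) / (z(z-1))` with `a = F₁₂F₂₃F₃₁`, `b = F₁₃F₂₁F₃₂`, and
`(F₂₃F₃₂)' = -z (F₁₂F₂₁)'`; hence `f' = F₁₂F₂₁` and `z(z-1)f'' = a - b`. The first integrals
express `a + b` through `g₁ = F₂₃F₃₂` and `g₂ = F₁₃F₃₁` (a cubic identity), while
`ab = f' g₁ g₂`, so the equation for `f` is `(a - b)² = (a + b)² - 4ab`.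
-/

section FirstIntegrals

variable {R : Type*} [CommRing R] {F12 F21 F13 F31 F23 F32 d1 d2 d3 q1 : R}

theorem cubic_eq_of_first_integrals (hd1 : F12 + F13 = d1) (hd2 : F23 + F21 = d2)
    (hd3 : F31 + F32 = d3) (hq1 : F31 * F13 + F12 * F21 + F23 * F32 = q1) :
    F12 * F23 * F31 + F13 * F21 * F32 + (d2 - d3) * (F13 * F31) + (d1 - d3) * (F23 * F32)
      = -(d3 * q1) + d1 * d2 * d3 := by
  subst_vars
  ring

theorem sq_cubic_sub_eq_of_first_integrals (hd1 : F12 + F13 = d1) (hd2 : F23 + F21 = d2)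
    (hd3 : F31 + F32 = d3) (hq1 : F31 * F13 + F12 * F21 + F23 * F32 = q1) :
    (F12 * F23 * F31 - F13 * F21 * F32) ^ 2
      = (-(d3 * q1) + d1 * d2 * d3 - (d2 - d3) * (F13 * F31) - (d1 - d3) * (F23 * F32)) ^ 2
        - 4 * (F12 * F21) * (F23 * F32) * (F13 * F31) := by
  rw [← cubic_eq_of_first_integrals hd1 hd2 hd3 hq1]
  ring

end FirstIntegrals

section Flow

variable {F12 F21 F13 F31 F23 F32 : ℝ → ℝ} {z : ℝ}

theorem hasDerivAt_F12_mul_F21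
    (h12 : HasDerivAt F12 (-(((F12 z * F23 z - F12 z * F13 z) * z - F12 z * F23 z
      + F32 z * F13 z) / (z * (z - 1)))) z)
    (h21 : HasDerivAt F21 (((F21 z * F23 z - F21 z * F13 z) * z + F23 z * F31 z
      - F23 z * F21 z) / (z * (z - 1))) z) :
    HasDerivAt (fun w => F12 w * F21 w)
      ((F12 z * F23 z * F31 z - F13 z * F21 z * F32 z) / (z * (z - 1))) z :=
  (h12.mul h21).congr_deriv (by ring)

theorem hasDerivAt_F23_mul_F32
    (h23 : HasDerivAt F23 (-(((F21 z * F23 z - F21 z * F13 z) * z + F23 z * F31 z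
      - F23 z * F21 z) / (z * (z - 1)))) z)
    (h32 : HasDerivAt F32 (((-(F31 z * F12 z) + F21 z * F32 z) * z + F31 z * F32 z
      - F21 z * F32 z) / (z * (z - 1))) z) :
    HasDerivAt (fun w => F23 w * F32 w)
      (-z * ((F12 z * F23 z * F31 z - F13 z * F21 z * F32 z) / (z * (z - 1)))) z :=
  (h23.mul h32).congr_deriv (by ring)

theorem hasDerivAt_F23_mul_F32_add_mul_F12_mul_F21 (c : ℝ)
    (h12 : HasDerivAt F12 (-(((F12 z * F23 z - F12 z * F13 z) * z - F12 z * F23 z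
      + F32 z * F13 z) / (z * (z - 1)))) z)
    (h21 : HasDerivAt F21 (((F21 z * F23 z - F21 z * F13 z) * z + F23 z * F31 z
      - F23 z * F21 z) / (z * (z - 1))) z)
    (h23 : HasDerivAt F23 (-(((F21 z * F23 z - F21 z * F13 z) * z + F23 z * F31 z
      - F23 z * F21 z) / (z * (z - 1)))) z)
    (h32 : HasDerivAt F32 (((-(F31 z * F12 z) + F21 z * F32 z) * z + F31 z * F32 z
      - F21 z * F32 z) / (z * (z - 1))) z) :
    HasDerivAt (fun w => F23 w * F32 w + w * (F12 w * F21 w) - c) (F12 z * F21 z) z :=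
  (((hasDerivAt_F23_mul_F32 h23 h32).add
    ((hasDerivAt_id z).mul (hasDerivAt_F12_mul_F21 h12 h21))).sub_const c).congr_deriv
    (by simp only [id]; ring)

end Flow

/-- for a solution of the six-component system with first-integral values
`d₁, d₂, d₃, q₁` and `q₂ = -d₃q₁ + d₁d₂d₃`, the function
`f = F₂₃F₃₂ + zF₁₂F₂₁ - q₁/2` satisfies `f' = F₁₂F₂₁`,
`F₂₃F₃₂ = f - zf' + q₁/2`, `F₁₃F₃₁ = (z-1)f' - f + q₁/2`, and
`[z(z-1)f'']² = [q₂ - (d₂-d₃)g₂ - (d₁-d₃)g₁]² - 4f'g₁g₂`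
with `g₁ = f - zf' + q₁/2`, `g₂ = (z-1)f' - f + q₁/2`. -/
theorem stmt13 (F12 F21 F13 F31 F23 F32 : ℝ → ℝ) (S : Set ℝ)
    (hSopen : IsOpen S) (hS : ∀ z ∈ S, z ≠ 0 ∧ z ≠ 1)
    (hode : ∀ z ∈ S,
      HasDerivAt F12 (-(((F12 z * F23 z - F12 z * F13 z) * z - F12 z * F23 z
        + F32 z * F13 z) / (z * (z - 1)))) z ∧
      HasDerivAt F21 (((F21 z * F23 z - F21 z * F13 z) * z + F23 z * F31 z
        - F23 z * F21 z) / (z * (z - 1))) z ∧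
      HasDerivAt F13 (((F12 z * F23 z - F12 z * F13 z) * z - F12 z * F23 z
        + F32 z * F13 z) / (z * (z - 1))) z ∧
      HasDerivAt F31 (-(((-(F31 z * F12 z) + F21 z * F32 z) * z + F31 z * F32 z
        - F21 z * F32 z) / (z * (z - 1)))) z ∧
      HasDerivAt F23 (-(((F21 z * F23 z - F21 z * F13 z) * z + F23 z * F31 z
        - F23 z * F21 z) / (z * (z - 1)))) z ∧
      HasDerivAt F32 (((-(F31 z * F12 z) + F21 z * F32 z) * z + F31 z * F32 z
        - F21 z * F32 z) / (z * (z - 1))) z)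
    (d1 d2 d3 q1 q2 : ℝ)
    (hd1 : ∀ z ∈ S, F12 z + F13 z = d1)
    (hd2 : ∀ z ∈ S, F23 z + F21 z = d2)
    (hd3 : ∀ z ∈ S, F31 z + F32 z = d3)
    (hq1 : ∀ z ∈ S, F31 z * F13 z + F12 z * F21 z + F23 z * F32 z = q1)
    (hq2 : q2 = -(d3 * q1) + d1 * d2 * d3)
    (f : ℝ → ℝ)
    (hf : ∀ z ∈ S, f z = F23 z * F32 z + z * (F12 z * F21 z) - q1 / 2) :
    ∀ z ∈ S,
      HasDerivAt f (F12 z * F21 z) z ∧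
      F23 z * F32 z = f z - z * (F12 z * F21 z) + q1 / 2 ∧
      F13 z * F31 z = (z - 1) * (F12 z * F21 z) - f z + q1 / 2 ∧
      ∀ fpp : ℝ, HasDerivAt (fun w => F12 w * F21 w) fpp z →
        (z * (z - 1) * fpp) ^ 2
          = (q2 - (d2 - d3) * ((z - 1) * (F12 z * F21 z) - f z + q1 / 2)
              - (d1 - d3) * (f z - z * (F12 z * F21 z) + q1 / 2)) ^ 2
            - 4 * (F12 z * F21 z) * (f z - z * (F12 z * F21 z) + q1 / 2)
              * ((z - 1) * (F12 z * F21 z) - f z + q1 / 2) := by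
  intro z hz
  obtain ⟨hz0, hz1⟩ := hS z hz
  obtain ⟨h12, h21, -, -, h23, h32⟩ := hode z hz
  have hf' : HasDerivAt f (F12 z * F21 z) z :=
    (hasDerivAt_F23_mul_F32_add_mul_F12_mul_F21 (q1 / 2) h12 h21 h23 h32).congr_of_eventuallyEq
      (Filter.eventuallyEq_of_mem (hSopen.mem_nhds hz) hf)
  have hg1 : F23 z * F32 z = f z - z * (F12 z * F21 z) + q1 / 2 := by
    rw [hf z hz]; ring
  have hg2 : F13 z * F31 z = (z - 1) * (F12 z * F21 z) - f z + q1 / 2 := by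
    linear_combination hq1 z hz + hf z hz
  refine ⟨hf', hg1, hg2, fun fpp hfpp => ?_⟩
  have hzz : z * (z - 1) ≠ 0 := mul_ne_zero hz0 (sub_ne_zero.mpr hz1)
  rw [hfpp.unique (hasDerivAt_F12_mul_F21 h12 h21), mul_div_cancel₀ _ hzz, ← hg1, ← hg2, hq2]
  exact sq_cubic_sub_eq_of_first_integrals (hd1 z hz) (hd2 z hz) (hd3 z hz) (hq1 z hz)
end

section
/- The function F(z) = C₉ z^{C₂}(z−1)^{−C₂} / (C₈C₉z^{C₉} + ₂F₁(C₂, C₉; 1+C₉; 1/z)), with C₉ = 1−C₃, solves the ODE dF/dz = −F·[(F + C₃ − 1)(1−z) + C₂] / (z(z−1)). -/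
/-!
With `w = 1/z`, `G = ₂F₁(a, b; 1 + b; ·)`, `a = C₂`, `b = C₉`: since `(b)ₙ / (1 + b)ₙ = b / (b + n)`,
the coefficients of `G` are `b / (b + n)` times the binomial coefficients `(a)ₙ / n!` of
`(1 - w)^(-a)`. Differentiating termwise gives Euler's relation `w G' + b G = b (1 - w)^(-a)`,
and `(1 - 1/z)^(-a) = z^a (z - 1)^(-a)` is the numerator of `F` up to the factor `b`. The
Riccati equation for `F` is then the quotient rule followed by field arithmetic.
-/

open FormalMultilinearSeries
open scoped Nat NNReal ENNReal

/-- The Gauss hypergeometric function `₂F₁(a,b;c;w)` as a power series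
(with `(x)_n` the ascending Pochhammer symbol). -/
noncomputable def gaussHyp (a b c w : ℝ) : ℝ :=
  ∑' n : ℕ, ((ascPochhammer ℝ n).eval a * (ascPochhammer ℝ n).eval b
      / ((ascPochhammer ℝ n).eval c * (n.factorial : ℝ))) * w ^ n

namespace FormalMultilinearSeries

variable {𝕜 E F : Type*} [NontriviallyNormedField 𝕜] [NormedAddCommGroup E] [NormedSpace 𝕜 E]
  [NormedAddCommGroup F] [NormedSpace 𝕜 F]

theorem summable_natCast_mul_norm_mul_pow (p : FormalMultilinearSeries 𝕜 E F) {r : ℝ≥0}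
    (h : (r : ℝ≥0∞) < p.radius) : Summable fun n : ℕ => (n : ℝ) * ‖p n‖ * (r : ℝ) ^ n := by
  obtain ⟨ρ, hrρ, hρ⟩ := ENNReal.lt_iff_exists_nnreal_btwn.1 h
  have hρ0 : (0 : ℝ) < ρ := lt_of_le_of_lt r.2 (mod_cast hrρ)
  obtain ⟨C, -, hC⟩ := p.norm_mul_pow_le_of_lt_radius hρ
  have hq : ‖(r : ℝ) / ρ‖ < 1 := by
    rw [Real.norm_of_nonneg (by positivity), div_lt_one hρ0]
    exact_mod_cast hrρ
  refine .of_nonneg_of_le (fun n => by positivity) (fun n => ?_)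
    ((summable_pow_mul_geometric_of_norm_lt_one 1 hq).mul_left C)
  calc (n : ℝ) * ‖p n‖ * (r : ℝ) ^ n
      = (‖p n‖ * (ρ : ℝ) ^ n) * ((n : ℝ) ^ 1 * ((r : ℝ) / ρ) ^ n) := by
        rw [div_pow]; field_simp
    _ ≤ C * ((n : ℝ) ^ 1 * ((r : ℝ) / ρ) ^ n) := by gcongr; exact hC n

end FormalMultilinearSeries

theorem hasDerivAt_tsum_mul_pow {𝕜 : Type*} [RCLike 𝕜] {c : ℕ → 𝕜} {x : 𝕜}
    (hx : ‖x‖ₑ < (ofScalars 𝕜 c).radius) :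
    HasDerivAt (fun y => ∑' n, c n * y ^ n) (∑' n, n * c n * x ^ (n - 1)) x := by
  obtain ⟨ρ, hxρ, hρ⟩ := ENNReal.lt_iff_exists_nnreal_btwn.1 hx
  have hxρ : ‖x‖ < ρ := mod_cast hxρ
  have hρ0 : (0 : ℝ) < ρ := lt_of_le_of_lt (norm_nonneg x) hxρ
  have hu : Summable fun n : ℕ => (n : ℝ) * ‖c n‖ * (ρ : ℝ) ^ (n - 1) := by
    refine (((ofScalars 𝕜 c).summable_natCast_mul_norm_mul_pow hρ).mul_left (ρ : ℝ)⁻¹).congr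
      fun n => ?_
    rcases n with _ | n
    · simp
    · simp only [ofScalars_norm, Nat.add_sub_cancel, pow_succ]
      field_simp
  refine hasDerivAt_tsum_of_isPreconnected (g := fun n y => c n * y ^ n)
    (g' := fun n y => n * c n * y ^ (n - 1)) hu Metric.isOpen_ball
    (convex_ball (0 : 𝕜) _).isPreconnected (fun n y _ => ?_) (fun n y hy => ?_)
    (Metric.mem_ball_self hρ0) ?_ (mem_ball_zero_iff.2 hxρ)
  · exact ((hasDerivAt_pow n y).const_mul (c n)).congr_deriv (by ring)
  · rw [mem_ball_zero_iff] at hy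
    simp only [norm_mul, norm_pow, RCLike.norm_natCast]
    gcongr
  · exact summable_of_ne_finset_zero (s := {0}) fun n hn => by simp [zero_pow (by simpa using hn)]

/-- When a parameter is a nonpositive integer the series terminates; for `c` this happens through
the junk value `0⁻¹ = 0` of the coefficients. -/
theorem one_le_radius_ordinaryHypergeometricSeries {𝕂 : Type*} (𝔸 : Type*) [RCLike 𝕂]
    [NormedDivisionRing 𝔸] [NormedAlgebra 𝕂 𝔸] (a b c : 𝕂) :
    1 ≤ (ordinaryHypergeometricSeries 𝔸 a b c).radius := by
  by_cases habc : ∀ k : ℕ, (k : 𝕂) ≠ -a ∧ (k : 𝕂) ≠ -b ∧ (k : 𝕂) ≠ -c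
  · rw [ordinaryHypergeometricSeries_radius_eq_one 𝔸 a b c habc]
  · simp only [not_forall, not_and_or, not_not] at habc
    obtain ⟨k, hk | hk | hk⟩ := habc
    · rw [← neg_neg a, ← hk, ordinaryHypergeometric_radius_top_of_neg_nat₁]; exact le_top
    · rw [← neg_neg b, ← hk, ordinaryHypergeometric_radius_top_of_neg_nat₂]; exact le_top
    · rw [← neg_neg c, ← hk, ordinaryHypergeometric_radius_top_of_neg_nat₃]; exact le_top

theorem Real.hasSum_ascPochhammer_div_factorial_mul_pow (a : ℝ) {w : ℝ} (hw : |w| < 1) :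
    HasSum (fun n => (ascPochhammer ℝ n).eval a / n ! * w ^ n) ((1 - w) ^ (-a)) := by
  have hw' : w ∈ Metric.eball (0 : ℝ) 1 := by
    simpa [Metric.mem_eball, edist_dist, Real.dist_eq] using hw
  have hchoose (n : ℕ) : Ring.choose (a + n - 1) n = (ascPochhammer ℝ n).eval a / n ! := by
    rw [← Ring.multichoose_eq, eq_div_iff (by exact_mod_cast n.factorial_ne_zero), mul_comm,
      ← nsmul_eq_mul, Ring.factorial_nsmul_multichoose_eq_ascPochhammer,
      Polynomial.ascPochhammer_smeval_eq_eval]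
  have := (Real.one_div_one_sub_rpow_hasFPowerSeriesOnBall_zero a).hasSum hw'
  simp only [ofScalars_apply_eq, zero_add, smul_eq_mul, hchoose] at this
  rwa [Real.rpow_neg (by linarith [le_abs_self w]), ← one_div]

theorem add_mul_ordinaryHypergeometricCoefficient_one_add {𝕂 : Type*} [Field 𝕂] [CharZero 𝕂]
    (a b : 𝕂) (n : ℕ) (h : (ascPochhammer 𝕂 n).eval (1 + b) ≠ 0) :
    (b + n) * ordinaryHypergeometricCoefficient a b (1 + b) n =
      b * ((ascPochhammer 𝕂 n).eval a / n !) := by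
  have hshift : (ascPochhammer 𝕂 n).eval b * (b + n) = b * (ascPochhammer 𝕂 n).eval (1 + b) := by
    rw [← ascPochhammer_succ_eval, ascPochhammer_succ_left, Polynomial.eval_mul,
      Polynomial.eval_X, Polynomial.eval_comp, Polynomial.eval_add, Polynomial.eval_X,
      Polynomial.eval_one, add_comm b]
  have hn : (n ! : 𝕂) ≠ 0 := by exact_mod_cast n.factorial_ne_zero
  field_simp
  linear_combination (ascPochhammer 𝕂 n).eval a * hshift

theorem gaussHyp_eq_tsum (a b c w : ℝ) :
    gaussHyp a b c w = ∑' n, ordinaryHypergeometricCoefficient a b c n * w ^ n := by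
  simp only [gaussHyp, ordinaryHypergeometricCoefficient]
  congr! 2 with n
  ring

theorem hasDerivAt_gaussHyp_one_add {a b w : ℝ} (hb : ∀ n : ℕ, 1 + b + n ≠ 0) (hw0 : w ≠ 0)
    (hw : |w| < 1) :
    HasDerivAt (gaussHyp a b (1 + b)) (b * ((1 - w) ^ (-a) - gaussHyp a b (1 + b) w) / w) w := by
  set q := ordinaryHypergeometricCoefficient a b (1 + b)
  have hradius : ‖w‖ₑ < (ofScalars ℝ q).radius :=
    lt_of_lt_of_le (by simpa [enorm_eq_nnnorm, ← NNReal.coe_lt_one] using hw)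
      (one_le_radius_ordinaryHypergeometricSeries ℝ a b (1 + b))
  have hnorm : ‖w‖₊ < (ofScalars ℝ q).radius := by simpa [enorm_eq_nnnorm] using hradius
  rw [show gaussHyp a b (1 + b) = fun y => ∑' n, q n * y ^ n from funext (gaussHyp_eq_tsum a b _)]
  refine (hasDerivAt_tsum_mul_pow hradius).congr_deriv ?_
  set g := ∑' n : ℕ, n * q n * w ^ (n - 1)
  have hpoch (n : ℕ) : (ascPochhammer ℝ n).eval (1 + b) ≠ 0 := by
    rw [Ne, ascPochhammer_eval_eq_zero_iff]
    rintro ⟨k, -, hk⟩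
    exact hb k (by linear_combination hk)
  have hsum : HasSum (fun n => q n * w ^ n) (∑' n, q n * w ^ n) := by
    refine (Summable.of_norm_bounded ((ofScalars ℝ q).summable_norm_mul_pow hnorm)
      fun n => ?_).hasSum
    simp [norm_mul, norm_pow]
  have hsum_mul_natCast : HasSum (fun n => n * q n * w ^ n) (w * g) := by
    have hs : Summable fun n : ℕ => n * q n * w ^ n :=
      Summable.of_norm_bounded ((ofScalars ℝ q).summable_natCast_mul_norm_mul_pow hnorm)
        fun n => by simp [norm_mul, norm_pow]
    convert hs.hasSum using 1
    rw [← tsum_mul_left]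
    refine tsum_congr fun n => ?_
    rcases n with _ | n
    · simp
    · simp only [Nat.add_sub_cancel, pow_succ]
      ring
  have euler : w * g + b * ∑' n, q n * w ^ n = b * (1 - w) ^ (-a) := by
    refine (hsum_mul_natCast.add (hsum.mul_left b)).unique
      (((Real.hasSum_ascPochhammer_div_factorial_mul_pow a hw).mul_left b).congr_fun fun n => ?_)
    show (n : ℝ) * q n * w ^ n + b * (q n * w ^ n) = _
    linear_combination w ^ n * add_mul_ordinaryHypergeometricCoefficient_one_add a b n (hpoch n)
  field_simp
  linear_combination euler

theorem Real.hasDerivAt_rpow_const_of_pos {x : ℝ} (hx : 0 < x) (p : ℝ) :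
    HasDerivAt (fun t => t ^ p) (p * x ^ p / x) x := by
  convert Real.hasDerivAt_rpow_const (p := p) (Or.inl hx.ne') using 1
  rw [Real.rpow_sub_one hx.ne']
  ring

theorem stmt16_general (C2 C3 C8 C9 : ℝ) (hC9 : C9 = 1 - C3)
    (hc : ∀ n : ℕ, 1 + C9 + (n : ℝ) ≠ 0)
    (z : ℝ) (hz : 1 < z)
    (hden : C8 * C9 * z ^ C9 + gaussHyp C2 C9 (1 + C9) (1 / z) ≠ 0) :
    letI Ffun : ℝ → ℝ := fun t =>
      C9 * t ^ C2 * (t - 1) ^ (-C2) / (C8 * C9 * t ^ C9 + gaussHyp C2 C9 (1 + C9) (1 / t))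
    HasDerivAt Ffun
      (-(Ffun z * ((Ffun z + C3 - 1) * (1 - z) + C2)) / (z * (z - 1))) z := by
  have hz0 : 0 < z := by linarith
  have hz1 : 0 < z - 1 := by linarith
  have hw : |1 / z| < 1 := by
    rw [abs_of_pos (by positivity), div_lt_one hz0]
    exact hz
  have hbinom : (1 - 1 / z) ^ (-C2) = z ^ C2 * (z - 1) ^ (-C2) := by
    rw [show 1 - 1 / z = (z - 1) / z by field_simp, Real.div_rpow hz1.le hz0.le,
      Real.rpow_neg hz0.le, div_inv_eq_mul, mul_comm]
  have hG : HasDerivAt (fun t => gaussHyp C2 C9 (1 + C9) (1 / t))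
      (-(C9 * (z ^ C2 * (z - 1) ^ (-C2) - gaussHyp C2 C9 (1 + C9) (1 / z))) / z) z := by
    refine ((hasDerivAt_gaussHyp_one_add (a := C2) hc (by positivity) hw).comp z
      ((hasDerivAt_inv hz0.ne').congr_of_eventuallyEq (.of_forall fun t => one_div t)))
      |>.congr_deriv ?_
    rw [hbinom]
    field_simp
  have hnum : HasDerivAt (fun t => C9 * t ^ C2 * (t - 1) ^ (-C2))
      (C9 * (C2 * z ^ C2 / z) * (z - 1) ^ (-C2) + C9 * z ^ C2 * (-C2 * (z - 1) ^ (-C2) / (z - 1)))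
      z :=
    ((Real.hasDerivAt_rpow_const_of_pos hz0 C2).const_mul C9).mul
      (by simpa using (Real.hasDerivAt_rpow_const_of_pos hz1 (-C2)).comp_sub_const z 1)
  have hdenom : HasDerivAt (fun t => C8 * C9 * t ^ C9 + gaussHyp C2 C9 (1 + C9) (1 / t))
      (C8 * C9 * (C9 * z ^ C9 / z)
        + -(C9 * (z ^ C2 * (z - 1) ^ (-C2) - gaussHyp C2 C9 (1 + C9) (1 / z))) / z) z :=
    ((Real.hasDerivAt_rpow_const_of_pos hz0 C9).const_mul (C8 * C9)).add hG
  refine (hnum.div hdenom hden).congr_deriv ?_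
  have hden' : C9 * C8 * z ^ C9 + gaussHyp C2 C9 (1 + C9) (1 / z) ≠ 0 := by rwa [mul_comm C9]
  rw [show C3 = 1 - C9 by linarith]
  field_simp
  ring

/-- `F(z) = C₉ z^{C₂}(z-1)^{-C₂} / (C₈C₉z^{C₉} + ₂F₁(C₂,C₉;1+C₉;1/z))`,
with `C₉ = 1 - C₃`, solves `F' = -F[(F + C₃ - 1)(1-z) + C₂]/(z(z-1))`. -/
theorem stmt16 (C2 C3 C8 C9 : ℝ) (hC9 : C9 = 1 - C3) (hC9ne : C9 ≠ 0)
    (hc : ∀ n : ℕ, 1 + C9 + (n : ℝ) ≠ 0)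
    (z : ℝ) (hz : 1 < z)
    (hden : C8 * C9 * z ^ C9 + gaussHyp C2 C9 (1 + C9) (1 / z) ≠ 0) :
    letI Ffun : ℝ → ℝ := fun t =>
      C9 * t ^ C2 * (t - 1) ^ (-C2) / (C8 * C9 * t ^ C9 + gaussHyp C2 C9 (1 + C9) (1 / t))
    HasDerivAt Ffun
      (-(Ffun z * ((Ffun z + C3 - 1) * (1 - z) + C2)) / (z * (z - 1))) z :=
  stmt16_general C2 C3 C8 C9 hC9 hc z hz hden
end

section
/- Let e be a vector field with e∘X = X for all X, ∇ a torsionless connection with ∇e = 0, and suppose the commutator identity Lie_e(∇_X T) − ∇_X(Lie_e T) − ∇_{[e,X]}T = 0 holds for all vector fields X and all tensor fields T. If moreover Z∘R(W,Y)(X) + W∘R(Y,Z)(X) + Y∘R(Z,W)(X) = 0 for all vector fields, then ∇ is flat. Conversely, if ∇ is flat then the commutator identity holds. -/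
open scoped BigOperators

/-- Riemann curvature tensor of the connection with Christoffel symbols `Γ`. -/
noncomputable def covRiem {n : ℕ} (Γ : (Fin n → ℝ) → Fin n → Fin n → Fin n → ℝ)
    (p : Fin n → ℝ) (i j k l : Fin n) : ℝ :=
  pderiv' (fun q => Γ q i l j) k p - pderiv' (fun q => Γ q i k j) l p
    + ∑ m, (Γ p i k m * Γ p m l j - Γ p i l m * Γ p m k j)

/-- Product of tangent vectors with structure constants `c`. -/
def circv {n : ℕ} (c : (Fin n → ℝ) → Fin n → Fin n → Fin n → ℝ) (p : Fin n → ℝ)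
    (a b : Fin n → ℝ) : Fin n → ℝ :=
  fun i => ∑ j, ∑ k, c p i j k * a j * b k

/-- Curvature operator `R(X,Y)Z` on tangent vectors. -/
noncomputable def Rop {n : ℕ} (Γ : (Fin n → ℝ) → Fin n → Fin n → Fin n → ℝ)
    (p : Fin n → ℝ) (x y z : Fin n → ℝ) : Fin n → ℝ :=
  fun i => ∑ j, ∑ k, ∑ l, covRiem Γ p i j k l * x k * y l * z j

/-- Covariant derivative `(∇_X T)^i = X^j ∂_j T^i + Γ^i_{jk} X^j T^k`. -/
noncomputable def covD {n : ℕ} (Γ : (Fin n → ℝ) → Fin n → Fin n → Fin n → ℝ)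
    (X T : (Fin n → ℝ) → Fin n → ℝ) (p : Fin n → ℝ) : Fin n → ℝ :=
  fun i => (∑ j, X p j * pderiv' (fun q => T q i) j p)
    + ∑ j, ∑ k, Γ p i j k * X p j * T p k

/-- Lie derivative of a vector field `T` along `e`: `Lie_e T = [e, T]`. -/
noncomputable def lieD {n : ℕ} (e T : (Fin n → ℝ) → Fin n → ℝ) (p : Fin n → ℝ) :
    Fin n → ℝ :=
  fun i => ∑ j, (e p j * pderiv' (fun q => T q i) j p - T p j * pderiv' (fun q => e q i) j p)

/-- A smooth vector field on `ℝ^n`. -/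
def SmoothVF {n : ℕ} (X : (Fin n → ℝ) → Fin n → ℝ) : Prop :=
  ∀ i, ContDiff ℝ (⊤ : ℕ∞) fun p => X p i

section API

variable {m : ℕ} {f g : (Fin m → ℝ) → ℝ} {p : Fin m → ℝ} {k : Fin m}

lemma pderiv'_add (hf : DifferentiableAt ℝ f p) (hg : DifferentiableAt ℝ g p) :
    pderiv' (fun q => f q + g q) k p = pderiv' f k p + pderiv' g k p := by
  simp [pderiv', fderiv_fun_add hf hg]

lemma pderiv'_mul (hf : DifferentiableAt ℝ f p) (hg : DifferentiableAt ℝ g p) :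
    pderiv' (fun q => f q * g q) k p = f p * pderiv' g k p + pderiv' f k p * g p := by
  simp [pderiv', fderiv_fun_mul hf hg, mul_comm]

lemma pderiv'_sum {ι : Type*} (s : Finset ι) (F : ι → (Fin m → ℝ) → ℝ)
    (h : ∀ i ∈ s, DifferentiableAt ℝ (F i) p) :
    pderiv' (fun q => ∑ i ∈ s, F i q) k p = ∑ i ∈ s, pderiv' (F i) k p := by
  simp [pderiv', fderiv_fun_sum h]

lemma contDiff_pderiv' (hf : ContDiff ℝ (⊤ : ℕ∞) f) : ContDiff ℝ (⊤ : ℕ∞) (fun p => pderiv' f k p) :=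
  (hf.fderiv_right (le_refl _)).clm_apply contDiff_const

lemma ContDiff.dAt (hf : ContDiff ℝ (⊤ : ℕ∞) f) : DifferentiableAt ℝ f p :=
  hf.differentiable (by simp) p

lemma pderiv'_comm (hf : ContDiff ℝ (⊤ : ℕ∞) f) (j : Fin m) :
    pderiv' (fun q => pderiv' f j q) k p = pderiv' (fun q => pderiv' f k q) j p := by
  have hd : DifferentiableAt ℝ (fderiv ℝ f) p :=
    ((hf.fderiv_right (m := (⊤ : ℕ∞)) (le_refl _)).differentiable (by simp)) p
  have hsym := (hf.contDiffAt (x := p)).isSymmSndFDerivAt (by rw [minSmoothness_of_isRCLikeNormedField]; exact WithTop.coe_le_coe.mpr le_top)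
  have key : ∀ a b : Fin m, pderiv' (fun q => pderiv' f a q) b p
      = fderiv ℝ (fderiv ℝ f) p (Pi.single b 1) (Pi.single a 1) := by
    intro a b
    rw [show pderiv' (fun q => pderiv' f a q) b p
        = fderiv ℝ (fun q => (fderiv ℝ f q) (Pi.single a 1)) p (Pi.single b 1) from rfl]
    rw [fderiv_clm_apply hd (differentiableAt_const _)]
    simp
  rw [key, key, hsym]

end API

section Sums

variable {n : ℕ}

lemma swap2 (f : Fin n → Fin n → ℝ) :
    ∑ a, ∑ b, f a b = ∑ b, ∑ a, f a b := Finset.sum_comm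

lemma swap12 (f : Fin n → Fin n → Fin n → ℝ) :
    ∑ a, ∑ b, ∑ c, f a b c = ∑ b, ∑ a, ∑ c, f a b c := Finset.sum_comm

lemma swap23 (f : Fin n → Fin n → Fin n → ℝ) :
    ∑ a, ∑ b, ∑ c, f a b c = ∑ a, ∑ c, ∑ b, f a b c :=
  Finset.sum_congr rfl fun _ _ => Finset.sum_comm

lemma cycle3 (f : Fin n → Fin n → Fin n → ℝ) :
    ∑ a, ∑ b, ∑ c, f a b c = ∑ c, ∑ a, ∑ b, f a b c := by
  calc ∑ a, ∑ b, ∑ c, f a b c = ∑ a, ∑ c, ∑ b, f a b c := swap23 f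
    _ = ∑ c, ∑ a, ∑ b, f a b c := swap12 _

lemma cycle3' (f : Fin n → Fin n → Fin n → ℝ) :
    ∑ a, ∑ b, ∑ c, f a b c = ∑ b, ∑ c, ∑ a, f a b c := by
  calc ∑ a, ∑ b, ∑ c, f a b c = ∑ b, ∑ a, ∑ c, f a b c := swap12 f
    _ = ∑ b, ∑ c, ∑ a, f a b c := swap23 _

lemma swap12₄ (f : Fin n → Fin n → Fin n → Fin n → ℝ) :
    ∑ a, ∑ b, ∑ c, ∑ d, f a b c d = ∑ b, ∑ a, ∑ c, ∑ d, f a b c d := Finset.sum_comm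

lemma swap23₄ (f : Fin n → Fin n → Fin n → Fin n → ℝ) :
    ∑ a, ∑ b, ∑ c, ∑ d, f a b c d = ∑ a, ∑ c, ∑ b, ∑ d, f a b c d :=
  Finset.sum_congr rfl fun _ _ => Finset.sum_comm

lemma swap34₄ (f : Fin n → Fin n → Fin n → Fin n → ℝ) :
    ∑ a, ∑ b, ∑ c, ∑ d, f a b c d = ∑ a, ∑ b, ∑ d, ∑ c, f a b c d :=
  Finset.sum_congr rfl fun _ _ => Finset.sum_congr rfl fun _ _ => Finset.sum_comm

lemma perm4A (f : Fin n → Fin n → Fin n → Fin n → ℝ) :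
    ∑ a, ∑ b, ∑ c, ∑ d, f a b c d = ∑ d, ∑ a, ∑ c, ∑ b, f a b c d := by
  calc ∑ a, ∑ b, ∑ c, ∑ d, f a b c d
      = ∑ a, ∑ b, ∑ d, ∑ c, f a b c d := swap34₄ f
    _ = ∑ a, ∑ d, ∑ b, ∑ c, f a b c d := swap23₄ _
    _ = ∑ d, ∑ a, ∑ b, ∑ c, f a b c d := swap12₄ _
    _ = ∑ d, ∑ a, ∑ c, ∑ b, f a b c d := swap34₄ _

lemma perm4B (f : Fin n → Fin n → Fin n → Fin n → ℝ) :
    ∑ a, ∑ b, ∑ c, ∑ d, f a b c d = ∑ d, ∑ c, ∑ a, ∑ b, f a b c d := by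
  calc ∑ a, ∑ b, ∑ c, ∑ d, f a b c d
      = ∑ d, ∑ a, ∑ c, ∑ b, f a b c d := perm4A f
    _ = ∑ d, ∑ c, ∑ a, ∑ b, f a b c d :=
        Finset.sum_congr rfl fun _ _ => swap12 _

lemma bigIdentity (i : Fin n) (x y t : Fin n → ℝ)
    (dx dy dT ddT : Fin n → Fin n → ℝ)
    (g dg : Fin n → Fin n → Fin n → ℝ)
    (hddT : ∀ a b, ddT a b = ddT b a) :
    (((∑ j, y j * ((∑ a, (x a * ddT j a + dx j a * dT a i))
        + ∑ a, ∑ b, (g i a b * x a * dT j b + (g i a b * dx j a + dg j a b * x a) * t b)))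
      + ∑ j, ∑ k, g i j k * y j * ((∑ a, x a * dT a k) + ∑ a, ∑ b, g k a b * x a * t b))
    - ((∑ j, x j * ((∑ a, (y a * ddT j a + dy j a * dT a i))
        + ∑ a, ∑ b, (g i a b * y a * dT j b + (g i a b * dy j a + dg j a b * y a) * t b)))
      + ∑ j, ∑ k, g i j k * x j * ((∑ a, y a * dT a k) + ∑ a, ∑ b, g k a b * y a * t b)))
    - ((∑ j, (∑ a, (y a * dx a j - x a * dy a j)) * dT j i)
      + ∑ j, ∑ k, g i j k * (∑ a, (y a * dx a j - x a * dy a j)) * t k)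
    = ∑ j, ∑ k, ∑ l, (dg k l j - dg l k j + ∑ m, (g i k m * g m l j - g i l m * g m k j))
        * y k * x l * t j := by
  have h1 : ∑ j, ∑ a, y j * (x a * ddT j a) = ∑ j, ∑ a, x j * (y a * ddT j a) := by
    rw [swap2]
    exact Finset.sum_congr rfl fun j _ => Finset.sum_congr rfl fun a _ => by
      rw [hddT]; ring
  have h2 : ∑ j, ∑ a, y j * (dx j a * dT a i) = ∑ j, ∑ a, y a * dx a j * dT j i := by
    rw [swap2]
    exact Finset.sum_congr rfl fun _ _ => Finset.sum_congr rfl fun _ _ => by ring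
  have h2' : ∑ j, ∑ a, x j * (dy j a * dT a i) = ∑ j, ∑ a, x a * dy a j * dT j i := by
    rw [swap2]
    exact Finset.sum_congr rfl fun _ _ => Finset.sum_congr rfl fun _ _ => by ring
  have h3 : ∑ j, ∑ a, ∑ b, y j * (g i a b * x a * dT j b)
      = ∑ j, ∑ k, ∑ a, g i j k * x j * (y a * dT a k) := by
    rw [cycle3']
    exact Finset.sum_congr rfl fun _ _ => Finset.sum_congr rfl fun _ _ =>
      Finset.sum_congr rfl fun _ _ => by ring
  have h3' : ∑ j, ∑ a, ∑ b, x j * (g i a b * y a * dT j b)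
      = ∑ j, ∑ k, ∑ a, g i j k * y j * (x a * dT a k) := by
    rw [cycle3']
    exact Finset.sum_congr rfl fun _ _ => Finset.sum_congr rfl fun _ _ =>
      Finset.sum_congr rfl fun _ _ => by ring
  have h4 : ∑ j, ∑ a, ∑ b, y j * (g i a b * dx j a * t b)
      = ∑ j, ∑ k, ∑ a, g i j k * (y a * dx a j) * t k := by
    rw [cycle3']
    exact Finset.sum_congr rfl fun _ _ => Finset.sum_congr rfl fun _ _ =>
      Finset.sum_congr rfl fun _ _ => by ring
  have h4' : ∑ j, ∑ a, ∑ b, x j * (g i a b * dy j a * t b)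
      = ∑ j, ∑ k, ∑ a, g i j k * (x a * dy a j) * t k := by
    rw [cycle3']
    exact Finset.sum_congr rfl fun _ _ => Finset.sum_congr rfl fun _ _ =>
      Finset.sum_congr rfl fun _ _ => by ring
  have h5 : ∑ j, ∑ a, ∑ b, y j * (dg j a b * x a * t b)
      = ∑ j, ∑ k, ∑ l, dg k l j * y k * x l * t j := by
    rw [cycle3]
    exact Finset.sum_congr rfl fun _ _ => Finset.sum_congr rfl fun _ _ =>
      Finset.sum_congr rfl fun _ _ => by ring
  have h5' : ∑ j, ∑ a, ∑ b, x j * (dg j a b * y a * t b)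
      = ∑ j, ∑ k, ∑ l, dg l k j * y k * x l * t j := by
    calc ∑ j, ∑ a, ∑ b, x j * (dg j a b * y a * t b)
        = ∑ b, ∑ j, ∑ a, x j * (dg j a b * y a * t b) := cycle3 _
      _ = ∑ b, ∑ a, ∑ j, x j * (dg j a b * y a * t b) :=
          Finset.sum_congr rfl fun _ _ => swap2 _
      _ = ∑ j, ∑ k, ∑ l, dg l k j * y k * x l * t j :=
          Finset.sum_congr rfl fun _ _ => Finset.sum_congr rfl fun _ _ =>
            Finset.sum_congr rfl fun _ _ => by ring
  have h7 : ∑ j, ∑ k, ∑ a, ∑ b, g i j k * y j * (g k a b * x a * t b)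
      = ∑ j, ∑ k, ∑ l, ∑ m, g i k m * g m l j * y k * x l * t j := by
    rw [perm4A]
    exact Finset.sum_congr rfl fun _ _ => Finset.sum_congr rfl fun _ _ =>
      Finset.sum_congr rfl fun _ _ => Finset.sum_congr rfl fun _ _ => by ring
  have h7' : ∑ j, ∑ k, ∑ a, ∑ b, g i j k * x j * (g k a b * y a * t b)
      = ∑ j, ∑ k, ∑ l, ∑ m, g i l m * g m k j * y k * x l * t j := by
    rw [perm4B]
    exact Finset.sum_congr rfl fun _ _ => Finset.sum_congr rfl fun _ _ =>
      Finset.sum_congr rfl fun _ _ => Finset.sum_congr rfl fun _ _ => by ring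
  simp only [Finset.mul_sum, Finset.sum_mul, mul_add, add_mul, mul_sub, sub_mul,
    Finset.sum_add_distrib, Finset.sum_sub_distrib]
  linarith [h1, h2, h2', h3, h3', h4, h4', h5, h5', h7, h7']

end Sums

section Main

variable {n : ℕ} {Γ : (Fin n → ℝ) → Fin n → Fin n → Fin n → ℝ}
  {X Y T e : (Fin n → ℝ) → Fin n → ℝ}

lemma pderiv_covD (hΓ : ∀ i j k, ContDiff ℝ (⊤ : ℕ∞) fun p => Γ p i j k)
    (hX : SmoothVF X) (hT : SmoothVF T) (p : Fin n → ℝ) (i j : Fin n) :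
    pderiv' (fun q => covD Γ X T q i) j p =
      (∑ a, (X p a * pderiv' (fun q => pderiv' (fun r => T r i) a q) j p
          + pderiv' (fun q => X q a) j p * pderiv' (fun q => T q i) a p))
      + ∑ a, ∑ b, (Γ p i a b * X p a * pderiv' (fun q => T q b) j p
          + (Γ p i a b * pderiv' (fun q => X q a) j p
             + pderiv' (fun q => Γ q i a b) j p * X p a) * T p b) := by
  have dX : ∀ a (q : Fin n → ℝ), DifferentiableAt ℝ (fun r => X r a) q :=
    fun a q => (hX a).dAt
  have dT : ∀ a (q : Fin n → ℝ), DifferentiableAt ℝ (fun r => T r a) q :=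
    fun a q => (hT a).dAt
  have dΓ : ∀ i a b (q : Fin n → ℝ), DifferentiableAt ℝ (fun r => Γ r i a b) q :=
    fun i a b q => (hΓ i a b).dAt
  have ddT : ∀ a i (q : Fin n → ℝ),
      DifferentiableAt ℝ (fun r => pderiv' (fun s => T s i) a r) q :=
    fun a i q => (contDiff_pderiv' (hT i)).dAt
  simp only [covD]
  rw [pderiv'_add
      (by exact (DifferentiableAt.fun_sum fun a _ => (dX a p).mul (ddT a i p)))
      (by exact (DifferentiableAt.fun_sum fun a _ => DifferentiableAt.fun_sum fun b _ =>
        ((dΓ i a b p).mul (dX a p)).mul (dT b p)))]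
  rw [pderiv'_sum _ _ (fun a _ => (dX a p).fun_mul (ddT a i p))]
  rw [pderiv'_sum _ _ (fun a _ => DifferentiableAt.fun_sum fun b _ =>
        ((dΓ i a b p).fun_mul (dX a p)).fun_mul (dT b p))]
  congr 1
  · exact Finset.sum_congr rfl fun a _ => by
      rw [pderiv'_mul (dX a p) (ddT a i p)]
  · refine Finset.sum_congr rfl fun a _ => ?_
    rw [pderiv'_sum _ _ (fun b _ => ((dΓ i a b p).fun_mul (dX a p)).fun_mul (dT b p))]
    refine Finset.sum_congr rfl fun b _ => ?_
    rw [pderiv'_mul ((dΓ i a b p).fun_mul (dX a p)) (dT b p),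
        pderiv'_mul (dΓ i a b p) (dX a p)]

lemma curvature_identity (hΓ : ∀ i j k, ContDiff ℝ (⊤ : ℕ∞) fun p => Γ p i j k)
    (hY : SmoothVF Y) (hX : SmoothVF X) (hT : SmoothVF T) (p : Fin n → ℝ) (i : Fin n) :
    covD Γ Y (fun q => covD Γ X T q) p i - covD Γ X (fun q => covD Γ Y T q) p i
      - covD Γ (fun q => lieD Y X q) T p i
    = ∑ j, ∑ k, ∑ l, covRiem Γ p i j k l * Y p k * X p l * T p j := by
  have hddT : ∀ a b, pderiv' (fun q => pderiv' (fun r => T r i) b q) a p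
      = pderiv' (fun q => pderiv' (fun r => T r i) a q) b p :=
    fun a b => pderiv'_comm (hT i) b
  have e1 : covD Γ Y (fun q => covD Γ X T q) p i
      = (∑ j, Y p j * ((∑ a, (X p a * pderiv' (fun q => pderiv' (fun r => T r i) a q) j p
            + pderiv' (fun q => X q a) j p * pderiv' (fun q => T q i) a p))
          + ∑ a, ∑ b, (Γ p i a b * X p a * pderiv' (fun q => T q b) j p
            + (Γ p i a b * pderiv' (fun q => X q a) j p
               + pderiv' (fun q => Γ q i a b) j p * X p a) * T p b)))
        + ∑ j, ∑ k, Γ p i j k * Y p j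
            * ((∑ a, X p a * pderiv' (fun q => T q k) a p)
               + ∑ a, ∑ b, Γ p k a b * X p a * T p b) := by
    show (∑ j, Y p j * pderiv' (fun q => covD Γ X T q i) j p)
        + ∑ j, ∑ k, Γ p i j k * Y p j * covD Γ X T p k = _
    congr 1
    exact Finset.sum_congr rfl fun j _ => by rw [pderiv_covD hΓ hX hT p i j]
  have e2 : covD Γ X (fun q => covD Γ Y T q) p i
      = (∑ j, X p j * ((∑ a, (Y p a * pderiv' (fun q => pderiv' (fun r => T r i) a q) j p
            + pderiv' (fun q => Y q a) j p * pderiv' (fun q => T q i) a p))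
          + ∑ a, ∑ b, (Γ p i a b * Y p a * pderiv' (fun q => T q b) j p
            + (Γ p i a b * pderiv' (fun q => Y q a) j p
               + pderiv' (fun q => Γ q i a b) j p * Y p a) * T p b)))
        + ∑ j, ∑ k, Γ p i j k * X p j
            * ((∑ a, Y p a * pderiv' (fun q => T q k) a p)
               + ∑ a, ∑ b, Γ p k a b * Y p a * T p b) := by
    show (∑ j, X p j * pderiv' (fun q => covD Γ Y T q i) j p)
        + ∑ j, ∑ k, Γ p i j k * X p j * covD Γ Y T p k = _
    congr 1
    exact Finset.sum_congr rfl fun j _ => by rw [pderiv_covD hΓ hY hT p i j]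
  have e3 : covD Γ (fun q => lieD Y X q) T p i
      = (∑ j, (∑ a, (Y p a * pderiv' (fun q => X q j) a p
            - X p a * pderiv' (fun q => Y q j) a p)) * pderiv' (fun q => T q i) j p)
        + ∑ j, ∑ k, Γ p i j k * (∑ a, (Y p a * pderiv' (fun q => X q j) a p
            - X p a * pderiv' (fun q => Y q j) a p)) * T p k := rfl
  rw [e1, e2, e3]
  exact bigIdentity i (X p) (Y p) (T p)
    (fun j a => pderiv' (fun q => X q a) j p) (fun j a => pderiv' (fun q => Y q a) j p)
    (fun a b => pderiv' (fun q => T q b) a p)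
    (fun a b => pderiv' (fun q => pderiv' (fun r => T r i) b q) a p)
    (Γ p) (fun c a b => pderiv' (fun q => Γ q i a b) c p) hddT

end Main

section Glue

variable {n : ℕ} {Γ c : (Fin n → ℝ) → Fin n → Fin n → Fin n → ℝ}
  {e : (Fin n → ℝ) → Fin n → ℝ}

lemma lie_eq_cov (hsym : ∀ p i j k, Γ p i j k = Γ p i k j)
    (hflate : ∀ p i j, pderiv' (fun q => e q i) j p + (∑ k, Γ p i j k * e p k) = 0)
    (V : (Fin n → ℝ) → Fin n → ℝ) (p : Fin n → ℝ) (i : Fin n) :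
    lieD e V p i = covD Γ e V p i := by
  have he : ∀ j, pderiv' (fun q => e q i) j p = -∑ k, Γ p i j k * e p k :=
    fun j => by linarith [hflate p i j]
  show ∑ j, (e p j * pderiv' (fun q => V q i) j p - V p j * pderiv' (fun q => e q i) j p)
      = (∑ j, e p j * pderiv' (fun q => V q i) j p) + ∑ j, ∑ k, Γ p i j k * e p j * V p k
  rw [Finset.sum_sub_distrib]
  have key : ∑ j, V p j * pderiv' (fun q => e q i) j p
      = -∑ j, ∑ k, Γ p i j k * e p j * V p k := by
    calc ∑ j, V p j * pderiv' (fun q => e q i) j p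
        = ∑ j, ∑ k, -(V p j * (Γ p i j k * e p k)) := by
          refine Finset.sum_congr rfl fun j _ => ?_
          rw [he j, mul_neg, Finset.mul_sum, ← Finset.sum_neg_distrib]
      _ = ∑ k, ∑ j, -(V p j * (Γ p i j k * e p k)) := swap2 _
      _ = ∑ j, ∑ k, -(Γ p i j k * e p j * V p k) :=
          Finset.sum_congr rfl fun j _ => Finset.sum_congr rfl fun k _ => by
            rw [hsym p i k j]; ring
      _ = -∑ j, ∑ k, Γ p i j k * e p j * V p k := by
          rw [← Finset.sum_neg_distrib]
          exact Finset.sum_congr rfl fun j _ => Finset.sum_neg_distrib _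
  rw [key]
  ring

lemma commutator_eq (hΓ : ∀ i j k, ContDiff ℝ (⊤ : ℕ∞) fun p => Γ p i j k)
    (hesmooth : SmoothVF e)
    (hsym : ∀ p i j k, Γ p i j k = Γ p i k j)
    (hflate : ∀ p i j, pderiv' (fun q => e q i) j p + (∑ k, Γ p i j k * e p k) = 0)
    (T X : (Fin n → ℝ) → Fin n → ℝ) (hT : SmoothVF T) (hX : SmoothVF X)
    (p : Fin n → ℝ) (i : Fin n) :
    lieD e (fun q => covD Γ X T q) p i - covD Γ X (fun q => lieD e T q) p i
      - covD Γ (fun q => lieD e X q) T p i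
    = ∑ j, ∑ k, ∑ l, covRiem Γ p i j k l * e p k * X p l * T p j := by
  have hfun : (fun q => lieD e T q) = (fun q => covD Γ e T q) :=
    funext fun q => funext fun i' => lie_eq_cov hsym hflate T q i'
  rw [lie_eq_cov hsym hflate (fun q => covD Γ X T q) p i, hfun]
  exact curvature_identity hΓ hesmooth hX hT p i

end Glue
/-- let `e` be the unit of `∘`, `∇` torsionless with `∇e = 0`, and suppose
`Z∘R(W,Y)X + W∘R(Y,Z)X + Y∘R(Z,W)X = 0`.  If the commutator identity
`Lie_e(∇_X T) - ∇_X(Lie_e T) - ∇_{[e,X]}T = 0` holds for all (smooth vector) fields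
`T, X`, then `∇` is flat; conversely, if `∇` is flat the commutator identity holds. -/
theorem stmt17 (n : ℕ) (Γ c : (Fin n → ℝ) → Fin n → Fin n → Fin n → ℝ)
    (e : (Fin n → ℝ) → Fin n → ℝ)
    (hΓsmooth : ∀ i j k, ContDiff ℝ (⊤ : ℕ∞) fun p => Γ p i j k)
    (hesmooth : SmoothVF e)
    (hsym : ∀ p i j k, Γ p i j k = Γ p i k j)
    (hunit : ∀ (p : Fin n → ℝ) (x : Fin n → ℝ), circv c p (e p) x = x)
    (hflate : ∀ p i j, pderiv' (fun q => e q i) j p + (∑ k, Γ p i j k * e p k) = 0)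
    (hbianchi : ∀ (p : Fin n → ℝ) (x y z w : Fin n → ℝ),
      (fun i => circv c p z (Rop Γ p w y x) i + circv c p w (Rop Γ p y z x) i
        + circv c p y (Rop Γ p z w x) i) = fun _ => (0 : ℝ)) :
    ((∀ T X : (Fin n → ℝ) → Fin n → ℝ, SmoothVF T → SmoothVF X → ∀ p i,
        lieD e (fun q => covD Γ X T q) p i - covD Γ X (fun q => lieD e T q) p i
          - covD Γ (fun q => lieD e X q) T p i = 0)
      → ∀ p i j k l, covRiem Γ p i j k l = 0) ∧
    ((∀ p i j k l, covRiem Γ p i j k l = 0)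
      → ∀ T X : (Fin n → ℝ) → Fin n → ℝ, SmoothVF T → SmoothVF X → ∀ p i,
        lieD e (fun q => covD Γ X T q) p i - covD Γ X (fun q => lieD e T q) p i
          - covD Γ (fun q => lieD e X q) T p i = 0) := by
  constructor
  · -- commutator ⇒ flat
    intro hcomm p i j k l
    have hRe : ∀ (u v : Fin n → ℝ) (i' : Fin n), Rop Γ p (e p) u v i' = 0 := by
      intro u v i'
      have h0 := hcomm (fun _ => v) (fun _ => u) (fun _ => contDiff_const)
        (fun _ => contDiff_const) p i'
      rw [commutator_eq hΓsmooth hesmooth hsym hflate (fun _ => v) (fun _ => u)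
        (fun _ => contDiff_const) (fun _ => contDiff_const) p i'] at h0
      exact h0
    have hanti : ∀ i' j' k' l', covRiem Γ p i' j' k' l' = -covRiem Γ p i' j' l' k' := by
      intro i' j' k' l'
      have hs : ∑ m, (Γ p i' k' m * Γ p m l' j' - Γ p i' l' m * Γ p m k' j')
          = -∑ m, (Γ p i' l' m * Γ p m k' j' - Γ p i' k' m * Γ p m l' j') := by
        rw [← Finset.sum_neg_distrib]
        exact Finset.sum_congr rfl fun _ _ => by ring
      simp only [covRiem]
      rw [hs]; ring
    have hRe2 : ∀ (u v : Fin n → ℝ) (i' : Fin n), Rop Γ p u (e p) v i' = 0 := by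
      intro u v i'
      have hneg : Rop Γ p u (e p) v i' = -Rop Γ p (e p) u v i' := by
        show (∑ j', ∑ k', ∑ l', covRiem Γ p i' j' k' l' * u k' * e p l' * v j')
            = -(∑ j', ∑ k', ∑ l', covRiem Γ p i' j' k' l' * e p k' * u l' * v j')
        rw [← Finset.sum_neg_distrib]
        refine Finset.sum_congr rfl fun j' _ => ?_
        calc ∑ k', ∑ l', covRiem Γ p i' j' k' l' * u k' * e p l' * v j'
            = ∑ l', ∑ k', covRiem Γ p i' j' k' l' * u k' * e p l' * v j' := swap2 _
          _ = ∑ k', ∑ l', -(covRiem Γ p i' j' k' l' * e p k' * u l' * v j') :=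
              Finset.sum_congr rfl fun a _ => Finset.sum_congr rfl fun b _ => by
                rw [hanti i' j' b a]; ring
          _ = -(∑ k', ∑ l', covRiem Γ p i' j' k' l' * e p k' * u l' * v j') := by
              rw [← Finset.sum_neg_distrib]
              exact Finset.sum_congr rfl fun _ _ => Finset.sum_neg_distrib _
      rw [hneg, hRe u v i', neg_zero]
    have hRall : ∀ (w y v : Fin n → ℝ) (i' : Fin n), Rop Γ p w y v i' = 0 := by
      intro w y v i'
      have hb : circv c p (e p) (Rop Γ p w y v) i' + circv c p w (Rop Γ p y (e p) v) i'
          + circv c p y (Rop Γ p (e p) w v) i' = 0 :=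
        congrFun (hbianchi p v y (e p) w) i'
      have h1 : circv c p (e p) (Rop Γ p w y v) i' = Rop Γ p w y v i' :=
        congrFun (hunit p (Rop Γ p w y v)) i'
      have h2 : circv c p w (Rop Γ p y (e p) v) i' = 0 := by
        refine Finset.sum_eq_zero fun j' _ => Finset.sum_eq_zero fun k' _ => ?_
        rw [hRe2 y v k']; ring
      have h3 : circv c p y (Rop Γ p (e p) w v) i' = 0 := by
        refine Finset.sum_eq_zero fun j' _ => Finset.sum_eq_zero fun k' _ => ?_
        rw [hRe w v k']; ring
      linarith [hb, h1, h2, h3]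
    have hfin := hRall (Pi.single k 1) (Pi.single l 1) (Pi.single j 1) i
    have hval : Rop Γ p (Pi.single k 1) (Pi.single l 1) (Pi.single j 1) i
        = covRiem Γ p i j k l := by
      simp only [Rop]
      rw [Finset.sum_eq_single_of_mem j (Finset.mem_univ j)
        (fun b _ hb => Finset.sum_eq_zero fun k' _ => Finset.sum_eq_zero fun l' _ => by
          rw [Pi.single_eq_of_ne hb]; ring)]
      rw [Finset.sum_eq_single_of_mem k (Finset.mem_univ k)
        (fun b _ hb => Finset.sum_eq_zero fun l' _ => by
          rw [Pi.single_eq_of_ne hb]; ring)]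
      rw [Finset.sum_eq_single_of_mem l (Finset.mem_univ l)
        (fun b _ hb => by rw [Pi.single_eq_of_ne hb]; ring)]
      rw [Pi.single_eq_same, Pi.single_eq_same, Pi.single_eq_same]
      ring
    rw [hval] at hfin
    exact hfin
  · -- flat ⇒ commutator
    intro hflat T X hT hX p i
    rw [commutator_eq hΓsmooth hesmooth hsym hflate T X hT hX p i]
    refine Finset.sum_eq_zero fun j' _ => Finset.sum_eq_zero fun k' _ =>
      Finset.sum_eq_zero fun l' _ => ?_
    rw [hflat p i j' k' l']
    ring
end
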